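/- arXiv:1209.5929 — 3 statements merged into one kernel-verified Lean document; each statement's English description precedes it below -/
import Mathlib

section
/- Let D = (d_{ij}) be an m×m real matrix with d_{ii} ≥ 0, d_{ij} ≤ 0 for i ≠ j, ∑_j d_{ij} = 0 for all i, and suppose that for all distinct i, j and all subsets I of {1,...,m} containing j but not i, one has −(∑_{k ∈ I} d_{ik} + ∑_{k ∉ I} d_{jk}) ≥ δ for some δ > 0. Then for any vector u ∈ ℝ^m with u_1 ≥ u_k ≥ u_2 for all k = 3,...,m, one has ∑_{j=1}^m (d_{1j} − d_{2j}) u_j ≥ δ(u_1 − u_2). -/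
/-!
Put `c j = D a j - D b j`. Zero row sums turn the coupling condition into `δ ≤ ∑ k ∈ I, c k` for
every `I` containing `a` but not `b`, and give `∑ j, c j = 0`. Cutting `u` at an intermediate
value `t` into `min u t` and `max u t` splits both sides of the inequality additively
(`min + max = u + t` and `c` sums to zero), so induction on the number of values of `u` reduces
to a `u` taking only the values `u b` and `u a`, where `∑ j, c j * u j` is `u a - u b` times the
sum of `c` over the cut `{j | u j ≠ u b}`.
-/

open Finset

theorem Finset.card_image_univ_lt {ι β : Type*} [Fintype ι] [DecidableEq β] {f g : ι → β}
    (hfg : ∀ j, ∃ k, f j = g k) (a : ι) (ha : ∀ j, f j ≠ g a) :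
    #(univ.image f) < #(univ.image g) := by
  calc #(univ.image f) ≤ #((univ.image g).erase (g a)) := by
        refine card_le_card fun x hx => ?_
        obtain ⟨j, -, rfl⟩ := mem_image.1 hx
        obtain ⟨k, hk⟩ := hfg j
        exact mem_erase.2 ⟨ha j, hk ▸ mem_image_of_mem g (mem_univ k)⟩
    _ < #(univ.image g) := card_erase_lt_of_mem (mem_image_of_mem g (mem_univ a))

section CutBound

variable {ι : Type*} [Fintype ι] {c : ι → ℝ}

theorem sum_mul_eq_sum_mul_min_add_sum_mul_max (hc : ∑ j, c j = 0) (u : ι → ℝ) (t : ℝ) :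
    ∑ j, c j * u j = ∑ j, c j * min (u j) t + ∑ j, c j * max (u j) t := by
  have hsplit : ∀ j, c j * min (u j) t + c j * max (u j) t = c j * u j + t * c j := by
    intro j
    rw [← mul_add, min_add_max]
    ring
  rw [← sum_add_distrib, sum_congr rfl fun j _ => hsplit j, sum_add_distrib, ← mul_sum, hc,
    mul_zero, add_zero]

theorem sum_mul_eq_mul_sum_filter_of_two_valued (hc : ∑ j, c j = 0) {u : ι → ℝ} {a b : ι}
    (hu : ∀ j, u j = u b ∨ u j = u a) :
    ∑ j, c j * u j = (u a - u b) * ∑ j with u j ≠ u b, c j := by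
  have hstep : ∀ j, c j * u j = u b * c j + (u a - u b) * if u j ≠ u b then c j else 0 := by
    intro j
    by_cases hb : u j = u b
    · simp [hb, mul_comm]
    · rw [if_pos hb, (hu j).resolve_left hb]
      ring
  rw [sum_filter, mul_sum, sum_congr rfl fun j _ => hstep j, sum_add_distrib, ← mul_sum, hc,
    mul_zero, zero_add]

variable {δ : ℝ} {a b : ι}

theorem le_sum_mul_of_two_valued (hc : ∑ j, c j = 0)
    (hcut : ∀ I : Finset ι, a ∈ I → b ∉ I → δ ≤ ∑ k ∈ I, c k) {u : ι → ℝ} (hab : u b ≤ u a)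
    (hu : ∀ j, u j = u b ∨ u j = u a) :
    δ * (u a - u b) ≤ ∑ j, c j * u j := by
  rw [sum_mul_eq_mul_sum_filter_of_two_valued hc hu, mul_comm]
  rcases hab.eq_or_lt with heq | hlt
  · simp [heq]
  · refine mul_le_mul_of_nonneg_left (hcut _ ?_ ?_) (sub_nonneg.2 hab)
    · simpa using hlt.ne'
    · simp

theorem le_sum_mul_of_cut (hc : ∑ j, c j = 0)
    (hcut : ∀ I : Finset ι, a ∈ I → b ∉ I → δ ≤ ∑ k ∈ I, c k) (u : ι → ℝ)
    (hu : ∀ j, u b ≤ u j ∧ u j ≤ u a) :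
    δ * (u a - u b) ≤ ∑ j, c j * u j := by
  induction hn : #(univ.image u) using Nat.strong_induction_on generalizing u with
  | _ n ih =>
  by_cases hmid : ∃ k, u b < u k ∧ u k < u a
  · obtain ⟨k, hbk, hka⟩ := hmid
    set t := u k
    have hlow : δ * (t - u b) ≤ ∑ j, c j * min (u j) t := by
      have hcard : #(univ.image fun j => min (u j) t) < n := hn ▸ card_image_univ_lt
        (fun j => (min_choice (u j) t).elim (⟨j, ·⟩) (⟨k, ·⟩)) a
        fun j => ((min_le_right _ _).trans_lt hka).ne
      have := ih _ hcard (fun j => min (u j) t)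
        (fun j => ⟨min_le_min_right t (hu j).1, min_le_min_right t (hu j).2⟩) rfl
      simpa [hbk.le, hka.le] using this
    have hhigh : δ * (u a - t) ≤ ∑ j, c j * max (u j) t := by
      have hcard : #(univ.image fun j => max (u j) t) < n := hn ▸ card_image_univ_lt
        (fun j => (max_choice (u j) t).elim (⟨j, ·⟩) (⟨k, ·⟩)) b
        fun j => (hbk.trans_le (le_max_right _ _)).ne'
      have := ih _ hcard (fun j => max (u j) t)
        (fun j => ⟨max_le_max_right t (hu j).1, max_le_max_right t (hu j).2⟩) rfl
      simpa [hbk.le, hka.le] using this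
    rw [sum_mul_eq_sum_mul_min_add_sum_mul_max hc u t]
    linarith
  · push Not at hmid
    refine le_sum_mul_of_two_valued hc hcut (hu a).1 fun j => ?_
    rcases (hu j).1.eq_or_lt with h | h
    · exact .inl h.symm
    · exact .inr (le_antisymm (hu j).2 (hmid j h))

end CutBound

theorem stmt_9_general (m : ℕ) (D : Matrix (Fin m) (Fin m) ℝ) (δ : ℝ)
    (hrow : ∀ i, ∑ j, D i j = 0)
    (hcoupl : ∀ i j, i ≠ j → ∀ I : Finset (Fin m), j ∈ I → i ∉ I →
      δ ≤ -((∑ k ∈ I, D i k) + ∑ k ∈ Iᶜ, D j k))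
    (a b : Fin m) (hab : a ≠ b) (u : Fin m → ℝ)
    (hu : ∀ k, k ≠ a → k ≠ b → u b ≤ u k ∧ u k ≤ u a) (huab : u b ≤ u a) :
    δ * (u a - u b) ≤ ∑ j, (D a j - D b j) * u j := by
  have hc : ∑ j, (D a j - D b j) = 0 := by simp [sum_sub_distrib, hrow]
  have hcut (I : Finset (Fin m)) (haI : a ∈ I) (hbI : b ∉ I) :
      δ ≤ ∑ k ∈ I, (D a k - D b k) := by
    rw [sum_sub_distrib]
    linarith [hcoupl b a hab.symm I haI hbI, sum_add_sum_compl I (D a), hrow a]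
  refine le_sum_mul_of_cut hc hcut u fun k => ?_
  by_cases hka : k = a
  · subst hka; exact ⟨huab, le_rfl⟩
  by_cases hkb : k = b
  · subst hkb; exact ⟨le_rfl, huab⟩
  exact hu k hka hkb

/-- Key algebraic inequality: for a monotone matrix with uniformly coupled rows,
and u with u_a largest and u_b smallest, ∑ⱼ (d_{aj} − d_{bj}) uⱼ ≥ δ (u_a − u_b). -/
theorem stmt_9 (m : ℕ) (D : Matrix (Fin m) (Fin m) ℝ) (δ : ℝ) (hδ : 0 < δ)
    (hdiag : ∀ i, 0 ≤ D i i)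
    (hoff : ∀ i j, i ≠ j → D i j ≤ 0)
    (hrow : ∀ i, ∑ j, D i j = 0)
    (hcoupl : ∀ i j, i ≠ j → ∀ I : Finset (Fin m), j ∈ I → i ∉ I →
      δ ≤ -((∑ k ∈ I, D i k) + ∑ k ∈ Iᶜ, D j k))
    (a b : Fin m) (hab : a ≠ b) (u : Fin m → ℝ)
    (hu : ∀ k, k ≠ a → k ≠ b → u b ≤ u k ∧ u k ≤ u a) (huab : u b ≤ u a) :
    δ * (u a - u b) ≤ ∑ j, (D a j - D b j) * u j :=
  stmt_9_general m D δ hrow hcoupl a b hab u hu huab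
end

section
/- Let D = (d_{ij}) be an m×m matrix satisfying the nonzero condition: for all i, j there exists k with d_{ik} d_{jk} ≠ 0. If additionally D is monotone (d_{ii} ≥ 0, d_{ij} ≤ 0 for i ≠ j, row sums zero), then for all distinct i, j and every subset I of {1,...,m} containing j but not i, the quantity −(∑_{k ∈ I} d_{ik} + ∑_{k ∉ I} d_{jk}) is strictly positive. -/
/-- Under the nonzero condition and monotonicity, the coupling quantity
−(∑_{k∈I} d_{ik} + ∑_{k∉I} d_{jk}) is strictly positive for i ∉ I ∋ j, i ≠ j. -/
theorem stmt_10 (m : ℕ) (hm : 2 ≤ m) (D : Matrix (Fin m) (Fin m) ℝ)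
    (hdiag : ∀ i, 0 ≤ D i i)
    (hoff : ∀ i j, i ≠ j → D i j ≤ 0)
    (hrow : ∀ i, ∑ j, D i j = 0)
    (hnz : ∀ i j, ∃ k, D i k * D j k ≠ 0) :
    ∀ i j, i ≠ j → ∀ I : Finset (Fin m), j ∈ I → i ∉ I →
      0 < -((∑ k ∈ I, D i k) + ∑ k ∈ Iᶜ, D j k) := by
  intro i j hij I hjI hiI
  have h1 : ∑ k ∈ I, D i k ≤ 0 := by
    apply Finset.sum_nonpos
    intro k hk
    exact hoff i k (fun h => hiI (h ▸ hk))
  have h2 : ∑ k ∈ Iᶜ, D j k ≤ 0 := by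
    apply Finset.sum_nonpos
    intro k hk
    exact hoff j k (fun h => (Finset.mem_compl.mp hk) (h ▸ hjI))
  obtain ⟨k, hk⟩ := hnz i j
  have hik : D i k ≠ 0 := fun h => hk (by simp [h])
  have hjk : D j k ≠ 0 := fun h => hk (by simp [h])
  by_cases hkI : k ∈ I
  · have hlt : ∑ k ∈ I, D i k < 0 := by
      apply Finset.sum_neg' (fun l hl => hoff i l (fun h => hiI (h ▸ hl)))
      exact ⟨k, hkI, lt_of_le_of_ne (hoff i k (fun h => hiI (h ▸ hkI))) hik⟩
    linarith
  · have hkc : k ∈ Iᶜ := Finset.mem_compl.mpr hkI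
    have hlt : ∑ k ∈ Iᶜ, D j k < 0 := by
      apply Finset.sum_neg' (fun l hl => hoff j l (fun h => (Finset.mem_compl.mp hl) (h ▸ hjI)))
      exact ⟨k, hkc, lt_of_le_of_ne (hoff j k (fun h => hkI (h ▸ hjI))) hjk⟩
    linarith
end

section
/- Let D = (d_{ij}) be an m×m monotone, irreducible matrix, and suppose w_1,...,w_m : T^N → ℝ satisfy |w_1(x)| ≤ M for all x and |∑_{j=2}^m d_{ij}(x) w_j(x)| ≤ C for all i = 1,...,m and x (where d_{ij}(x) are continuous in x, with the monotone and irreducible structure holding for each x, and d_{11}(x) ≥ δ₀ > 0 uniformly). Then there exists a constant C' depending only on C, δ₀, m, and the positive left null vector Λ(x) such that min_{j ≥ 2} |w_j(x)| ≤ C' for all x. -/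
/-!
Write index `1` of the paper as `0 : Fin m`. Deleting row and column `1` from `D(x)` leaves an
invertible matrix `B(x)`: a vector killed by `B(x)` extends by `0` to a vector `u` with
`(D(x) u)_i = 0` for `i ≠ 1`, and the maximum principle for `D(x)`, applied to `u` and `-u`,
forces `u = 0`. The equations for `i ≥ 2` say `B(x) (w_j(x))_{j ≥ 2} = b(x)` with `‖b(x)‖_∞ ≤ C`,
and `x ↦ B(x)⁻¹` is continuous on a compact space, hence bounded; so every `w_j` with `j ≥ 2` is
uniformly bounded.
-/

open Matrix Finset

/-- The paper's monotone irreducible coupling matrices: `-A` is the generator of an irreducible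
continuous-time Markov chain. -/
structure Matrix.IsIrreducibleCoupling {ι : Type*} [Fintype ι] (A : Matrix ι ι ℝ) : Prop where
  off_diag_nonpos : ∀ i j, i ≠ j → A i j ≤ 0
  sum_row_eq_zero : ∀ i, ∑ j, A i j = 0
  irreducible : ∀ I : Finset ι, I.Nonempty → I ≠ univ → ∃ i ∈ I, ∃ j, j ∉ I ∧ A i j ≠ 0

theorem Matrix.mulVec_apply_eq_sum_mul_sub {ι R : Type*} [Fintype ι] [NonUnitalNonAssocRing R]
    {A : Matrix ι ι R} (hrow : ∀ i, ∑ j, A i j = 0) (u : ι → R) (c : R) (i : ι) :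
    (A *ᵥ u) i = ∑ k, A i k * (u k - c) := by
  simp only [mul_sub, sum_sub_distrib, ← sum_mul, hrow i, zero_mul, sub_zero]
  rfl

namespace Matrix.IsIrreducibleCoupling

variable {ι : Type*} [Fintype ι] {A : Matrix ι ι ℝ}

/-- Weak maximum principle. Irreducibility yields a row `i` of the set where `u` attains a
positive maximum `T` with a nonzero entry outside that set; then
`(A u)_i = ∑ A_ik (u_k - T) > 0`. -/
theorem le_zero_of_mulVec_eq_zero_of_ne (hA : A.IsIrreducibleCoupling) {z : ι} {u : ι → ℝ}
    (hz : u z = 0) (hu : ∀ i, i ≠ z → (A *ᵥ u) i = 0) (j : ι) : u j ≤ 0 := by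
  by_contra! hj
  obtain ⟨jmax, -, hmax⟩ := exists_max_image univ u ⟨j, mem_univ _⟩
  set T := u jmax
  have hT : 0 < T := hj.trans_le (hmax j (mem_univ _))
  set I := univ.filter fun k => u k = T
  have hzI : z ∉ I := by simp [I, hz, hT.ne]
  obtain ⟨i, hiI, k, hkI, hik⟩ :=
    hA.irreducible I ⟨jmax, mem_filter.2 ⟨mem_univ _, rfl⟩⟩ fun h => hzI (h ▸ mem_univ z)
  have hui : u i = T := (mem_filter.mp hiI).2
  have huk : u k < T := (hmax k (mem_univ _)).lt_of_ne fun h => hkI (by simp [I, h])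
  have hpos : 0 < ∑ l, A i l * (u l - T) := by
    refine sum_pos' (fun l _ => ?_) ⟨k, mem_univ _, ?_⟩
    · rcases eq_or_ne i l with rfl | hil
      · simp [hui]
      · exact mul_nonneg_of_nonpos_of_nonpos (hA.off_diag_nonpos i l hil)
          (by linarith [hmax l (mem_univ _)])
    · exact mul_pos_of_neg_of_neg
        ((hA.off_diag_nonpos i k fun h => hkI (h ▸ hiI)).lt_of_ne hik) (by linarith)
  rw [← mulVec_apply_eq_sum_mul_sub hA.sum_row_eq_zero, hu i fun h => hzI (h ▸ hiI)] at hpos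
  exact hpos.false

theorem eq_zero_of_mulVec_eq_zero_of_ne (hA : A.IsIrreducibleCoupling) {z : ι} {u : ι → ℝ}
    (hz : u z = 0) (hu : ∀ i, i ≠ z → (A *ᵥ u) i = 0) : u = 0 := by
  funext j
  refine le_antisymm (hA.le_zero_of_mulVec_eq_zero_of_ne hz hu j) ?_
  have := hA.le_zero_of_mulVec_eq_zero_of_ne (z := z) (u := -u) (by simp [hz])
    (fun i hi => by simp [mulVec_neg, hu i hi]) j
  simpa [neg_nonpos] using this

theorem det_submatrix_ne_zero [DecidableEq ι] (hA : A.IsIrreducibleCoupling) (z : ι) :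
    (A.submatrix ((↑) : {j // j ≠ z} → ι) (↑)).det ≠ 0 := by
  rw [Ne, ← exists_mulVec_eq_zero_iff]
  rintro ⟨v, hv0, hv⟩
  let u : ι → ℝ := fun j => if h : j = z then 0 else v ⟨j, h⟩
  have hu : ∀ i, i ≠ z → (A *ᵥ u) i = 0 := fun i hi => by
    have hz' : ∀ k : {j // j ≠ z}, (k : ι) ≠ z := fun k => k.2
    simpa [mulVec, dotProduct, Fintype.sum_eq_add_sum_subtype_ne _ z, u, hz']
      using congrFun hv ⟨i, hi⟩
  have := hA.eq_zero_of_mulVec_eq_zero_of_ne (by simp [u]) hu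
  exact hv0 (funext fun j => by simpa [u, j.2] using congrFun this j)

end Matrix.IsIrreducibleCoupling

theorem Matrix.submatrix_ne_mulVec_apply {ι R : Type*} [Fintype ι] [DecidableEq ι]
    [NonUnitalNonAssocSemiring R] (A : Matrix ι ι R) (z : ι) (v : ι → R) (i : {j // j ≠ z}) :
    (A.submatrix ((↑) : {j // j ≠ z} → ι) (↑) *ᵥ fun j : {j // j ≠ z} => v j) i =
      ∑ j ∈ univ.filter (· ≠ z), A i j * v j := by
  simp only [mulVec, dotProduct, submatrix_apply]
  exact (sum_subtype (univ.filter (· ≠ z)) (p := (· ≠ z)) (by simp) fun j => A i j * v j).symm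

theorem Continuous.matrix_inv_of_det_ne_zero {X n : Type*} [TopologicalSpace X] [Fintype n]
    [DecidableEq n] {A : X → Matrix n n ℝ} (hA : Continuous A) (hdet : ∀ x, (A x).det ≠ 0) :
    Continuous fun x => (A x)⁻¹ :=
  continuous_iff_continuousAt.2 fun x => (continuousAt_matrix_inv _ (by
    rw [Ring.inverse_eq_inv']
    exact continuousAt_inv₀ (hdet x))).comp hA.continuousAt

theorem exists_norm_inv_mulVec_le {X n : Type*} [TopologicalSpace X] [CompactSpace X]
    [Fintype n] [DecidableEq n] {A : X → Matrix n n ℝ} (hA : Continuous A)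
    (hdet : ∀ x, (A x).det ≠ 0) : ∃ K, 0 ≤ K ∧ ∀ x v, ‖(A x)⁻¹ *ᵥ v‖ ≤ K * ‖v‖ := by
  let := Matrix.linftyOpNormedAddCommGroup (m := n) (n := n) (α := ℝ)
  obtain ⟨K, hK⟩ := isCompact_univ.exists_bound_of_continuousOn
    (hA.matrix_inv_of_det_ne_zero hdet).continuousOn
  refine ⟨max K 0, le_max_right _ _, fun x v => ?_⟩
  exact (linfty_opNorm_mulVec _ v).trans
    (by gcongr; exact (hK x (Set.mem_univ x)).trans (le_max_left _ _))

theorem stmt_19 {X : Type*} [MetricSpace X] [CompactSpace X]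
    (m : ℕ) (hm : 2 ≤ m)
    (D : X → Matrix (Fin m) (Fin m) ℝ)
    (hDcont : ∀ i j, Continuous fun x => D x i j)
    (hoff : ∀ x, ∀ i j : Fin m, i ≠ j → D x i j ≤ 0)
    (hrow : ∀ x i, ∑ j, D x i j = 0)
    (hirr : ∀ x, ∀ I : Finset (Fin m), I.Nonempty → I ≠ Finset.univ →
      ∃ i ∈ I, ∃ j, j ∉ I ∧ D x i j ≠ 0)
    (w : Fin m → X → ℝ) (C : ℝ)
    (hsum : ∀ i x, |∑ j ∈ Finset.univ.filter (fun j => j ≠ ⟨0, by omega⟩), D x i j * w j x| ≤ C) :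
    ∃ C' : ℝ, ∀ x, ∃ j : Fin m, j ≠ ⟨0, by omega⟩ ∧ |w j x| ≤ C' := by
  set z : Fin m := ⟨0, by omega⟩
  let B : X → Matrix {j // j ≠ z} {j // j ≠ z} ℝ := fun x => (D x).submatrix (↑) (↑)
  have hB : ∀ x, (B x).det ≠ 0 := fun x =>
    IsIrreducibleCoupling.det_submatrix_ne_zero ⟨hoff x, hrow x, hirr x⟩ z
  obtain ⟨K, hK0, hK⟩ :=
    exists_norm_inv_mulVec_le (A := B) (continuous_matrix fun i j => hDcont i j) hB
  have hz1 : (⟨1, by omega⟩ : Fin m) ≠ z := by simp [z, Fin.ext_iff]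
  refine ⟨K * C, fun x => ⟨_, hz1, ?_⟩⟩
  set v : {j // j ≠ z} → ℝ := fun j => w j x
  have hC : 0 ≤ C := (abs_nonneg _).trans (hsum z x)
  have hBv : ‖B x *ᵥ v‖ ≤ C := (pi_norm_le_iff_of_nonneg hC).2 fun i => by
    rw [Real.norm_eq_abs, show (B x *ᵥ v) i = _ from submatrix_ne_mulVec_apply (D x) z (w · x) i]
    exact hsum i x
  calc |w ⟨1, _⟩ x| = ‖v ⟨_, hz1⟩‖ := rfl
    _ ≤ ‖(B x)⁻¹ *ᵥ (B x *ᵥ v)‖ := by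
      rw [mulVec_mulVec, nonsing_inv_mul _ (isUnit_iff_ne_zero.2 (hB x)), one_mulVec]
      exact norm_le_pi_norm v _
    _ ≤ K * C := (hK x _).trans (by gcongr)
end
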